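/- arXiv:1912.10665 — 2 statements merged into one kernel-verified Lean document; each statement's English description precedes it below -/
import Mathlib

section
/- Let Γ ⊂ (0,∞) be a uniformly discrete set with Σ_{γ∈Γ} 1/√γ < ∞, and define for t ≤ 0: φ₊(t) = (−t² / (1 + i√|t|)⁸) · Π_{γ∈Γ} (1 − i√(|t|/γ)) (1 + i√(|t|/γ))^{−1}. Then the function t ↦ φ₊(t)·𝟙_{(−∞,0]}(t) on ℝ is continuously differentiable and its derivative belongs to L²(ℝ). -/
open MeasureTheory

noncomputable section

/-- A set `S ⊆ ℝ` is uniformly discrete. -/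
def UniformlyDiscrete (S : Set ℝ) : Prop :=
  ∃ δ > (0:ℝ), ∀ x ∈ S, ∀ y ∈ S, x ≠ y → δ ≤ |x - y|

/-- The boundary value `φ₊(t)`, `t ≤ 0`, of the function `φ` from the paper:
`φ₊(t) = (-t²/(1+i√|t|)⁸) ∏_{γ∈Γ} (1-i√(|t|/γ))(1+i√(|t|/γ))⁻¹`. -/
def phiPlus (Γ : Set ℝ) (t : ℝ) : ℂ :=
  (-(t : ℂ) ^ 2 / (1 + Complex.I * (Real.sqrt |t| : ℝ)) ^ 8) *
    ∏' γ : Γ, ((1 - Complex.I * (Real.sqrt (|t| / (γ : ℝ)) : ℝ)) /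
      (1 + Complex.I * (Real.sqrt (|t| / (γ : ℝ)) : ℝ)))

/-! Each factor `(1 - i x) / (1 + i x)` equals `exp (-2 i arctan x)`, and `|arctan x| ≤ |x|` makes
`A(u) = ∑ arctan (u / √γ)` converge, with termwise derivative dominated by the summable `1 / √γ`.
So with `u = √(-t)` one has `φ₊(t) 𝟙(t ≤ 0) = -u⁴ exp (-2 i A(u)) / (1 + i u)⁸` for all real `t`
(both sides vanish for `t > 0`). The chain rule differentiates this off `t = 0`; the derivative
extends continuously to `0`, hence is the derivative there too, and it is `O(1 / (1 + t²))`,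
so it lies in `L²`. -/

open Real Set
open scoped Complex
open Complex (I)

lemma Real.abs_arctan_le_abs (x : ℝ) : |arctan x| ≤ |x| := by
  have key : ∀ y, 0 ≤ y → arctan y ≤ y := fun y hy =>
    (le_tan (arctan_nonneg.2 hy) (arctan_lt_pi_div_two y)).trans_eq (tan_arctan y)
  rcases le_total 0 x with hx | hx
  · rw [abs_of_nonneg hx, abs_of_nonneg (arctan_nonneg.2 hx)]
    exact key x hx
  · rw [abs_of_nonpos hx, abs_of_nonpos (arctan_le_zero.2 hx), ← arctan_neg]
    exact key (-x) (neg_nonneg.2 hx)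

lemma cexp_I_mul_arctan (x : ℝ) :
    cexp (I * arctan x) = (1 + I * x) / (√(1 + x ^ 2) : ℝ) := by
  rw [mul_comm, Complex.exp_mul_I, ← Complex.ofReal_cos, ← Complex.ofReal_sin, cos_arctan,
    sin_arctan]
  push_cast
  ring

lemma one_sub_I_mul_div_one_add_I_mul (x : ℝ) :
    (1 - I * x) / (1 + I * x) = cexp (-2 * I * arctan x) := by
  have h := cexp_I_mul_arctan (-x)
  rw [arctan_neg, neg_sq] at h
  have hs : ((√(1 + x ^ 2) : ℝ) : ℂ) ≠ 0 := by norm_cast; positivity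
  rw [show -2 * I * (arctan x : ℂ) = I * ((-arctan x : ℝ) : ℂ) - I * arctan x by push_cast; ring,
    Complex.exp_sub, h, cexp_I_mul_arctan]
  push_cast
  field_simp
  ring_nf

lemma norm_one_add_I_mul_sq (u : ℝ) : ‖1 + I * u‖ ^ 2 = 1 + u ^ 2 := by
  rw [Complex.sq_norm, Complex.normSq_apply]
  simp
  ring

lemma one_add_I_mul_ne_zero (u : ℝ) : (1 + I * u : ℂ) ≠ 0 := by
  intro h
  simpa using congrArg Complex.re h

lemma abs_le_norm_one_add_I_mul (u : ℝ) : |u| ≤ ‖1 + I * u‖ := by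
  simpa using Complex.abs_im_le_norm (1 + I * u)

lemma memLp_two_of_norm_le_div_one_add_sq {E : Type*} [NormedAddCommGroup E] {f : ℝ → E}
    (hf : AEStronglyMeasurable f) {K : ℝ} (hK : ∀ t, ‖f t‖ ≤ K / (1 + t ^ 2)) :
    MemLp f 2 volume := by
  refine (memLp_two_iff_integrable_sq_norm hf).2 <|
    (integrable_inv_one_add_sq.const_mul (K ^ 2)).mono' (hf.norm.pow 2) (ae_of_all _ fun t => ?_)
  have ht : 1 ≤ 1 + t ^ 2 := le_add_of_nonneg_right (sq_nonneg t)
  calc ‖‖f t‖ ^ 2‖ = ‖f t‖ ^ 2 := by simp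
    _ ≤ (K / (1 + t ^ 2)) ^ 2 := pow_le_pow_left₀ (norm_nonneg _) (hK t) 2
    _ = K ^ 2 / (1 + t ^ 2) ^ 2 := div_pow _ _ _
    _ ≤ K ^ 2 / (1 + t ^ 2) := div_le_div_of_nonneg_left (sq_nonneg K) (by positivity)
          (le_self_pow₀ ht two_ne_zero)
    _ = K ^ 2 * (1 + t ^ 2)⁻¹ := div_eq_mul_inv _ _

section ArctanSeries

variable {ι : Type*} {a : ι → ℝ}

def arctanSeries (a : ι → ℝ) (u : ℝ) : ℝ := ∑' i, arctan (a i * u)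

def arctanSeriesDeriv (a : ι → ℝ) (u : ℝ) : ℝ := ∑' i, a i / (1 + (a i * u) ^ 2)

lemma abs_div_one_add_mul_sq_le (b u : ℝ) : |b / (1 + (b * u) ^ 2)| ≤ |b| := by
  rw [abs_div, abs_of_pos (by positivity : (0 : ℝ) < 1 + (b * u) ^ 2)]
  exact div_le_self (abs_nonneg b) (le_add_of_nonneg_right (sq_nonneg _))

lemma summable_arctan_mul (ha : Summable a) (u : ℝ) : Summable fun i => arctan (a i * u) :=
  (ha.abs.mul_right |u|).of_norm_bounded fun _ =>
    (abs_arctan_le_abs _).trans_eq (abs_mul _ _)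

lemma hasDerivAt_arctanSeries (ha : Summable a) (u : ℝ) :
    HasDerivAt (arctanSeries a) (arctanSeriesDeriv a u) u := by
  refine hasDerivAt_tsum (g := fun i y => arctan (a i * y)) ha.abs (fun i y => ?_)
    (fun i y => abs_div_one_add_mul_sq_le (a i) y) (summable_arctan_mul ha 0) u
  exact (((hasDerivAt_id' y).const_mul (a i)).arctan).congr_deriv (by ring)

lemma continuous_arctanSeries (ha : Summable a) : Continuous (arctanSeries a) :=
  continuous_iff_continuousAt.2 fun u => (hasDerivAt_arctanSeries ha u).continuousAt

lemma continuous_arctanSeriesDeriv (ha : Summable a) : Continuous (arctanSeriesDeriv a) :=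
  continuous_tsum (fun i => continuous_const.div (by fun_prop) fun u => by positivity) ha.abs
    fun i u => abs_div_one_add_mul_sq_le (a i) u

lemma abs_arctanSeriesDeriv_le (ha : Summable a) (u : ℝ) :
    |arctanSeriesDeriv a u| ≤ ∑' i, |a i| :=
  tsum_of_norm_bounded (f := fun i => a i / (1 + (a i * u) ^ 2)) ha.abs.hasSum
    fun i => abs_div_one_add_mul_sq_le (a i) u

lemma hasProd_cayley (ha : Summable a) (u : ℝ) :
    HasProd (fun i => (1 - I * ((a i * u : ℝ) : ℂ)) / (1 + I * ((a i * u : ℝ) : ℂ)))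
      (cexp (-2 * I * arctanSeries a u)) := by
  have h := ((Complex.hasSum_ofReal.2 (summable_arctan_mul ha u).hasSum).mul_left (-2 * I)).cexp
  convert h using 1
  · exact funext fun i => one_sub_I_mul_div_one_add_I_mul _
  · rw [arctanSeries, Complex.ofReal_tsum]

end ArctanSeries

section PhiRadial

variable {ι : Type*} {a : ι → ℝ}

def phiRadial (a : ι → ℝ) (u : ℝ) : ℂ :=
  -(u : ℂ) ^ 4 * cexp (-2 * I * arctanSeries a u) / (1 + I * u) ^ 8

/-- Normalised so that it is the `t`-derivative of `phiRadial a √(-t)`. -/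
def phiRadialDeriv (a : ι → ℝ) (u : ℝ) : ℂ :=
  (u : ℂ) ^ 2 * cexp (-2 * I * arctanSeries a u) / (1 + I * u) ^ 8 *
    (2 - I * u * arctanSeriesDeriv a u - 4 * I * u / (1 + I * u))

lemma hasDerivAt_phiRadial (ha : Summable a) (u : ℝ) :
    HasDerivAt (phiRadial a) (-2 * u * phiRadialDeriv a u) u := by
  have hu : HasDerivAt (fun u : ℝ => (u : ℂ)) 1 u := (hasDerivAt_id' u).ofReal_comp
  have hexp : HasDerivAt (fun u => cexp (-2 * I * arctanSeries a u))
      (cexp (-2 * I * arctanSeries a u) * (-2 * I * arctanSeriesDeriv a u)) u :=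
    ((hasDerivAt_arctanSeries ha u).ofReal_comp.const_mul (-2 * I)).cexp
  have hden := ((hu.const_mul I).const_add 1).fun_pow 8
  have hne := one_add_I_mul_ne_zero u
  refine (((hu.fun_pow 4).neg.mul hexp).div hden (pow_ne_zero 8 hne)).congr_deriv ?_
  simp only [phiRadialDeriv, Pi.neg_apply, Pi.mul_apply]
  field_simp
  push_cast
  ring

lemma continuous_phiRadial (ha : Summable a) : Continuous (phiRadial a) :=
  continuous_iff_continuousAt.2 fun u => (hasDerivAt_phiRadial ha u).continuousAt

lemma continuous_phiRadialDeriv (ha : Summable a) : Continuous (phiRadialDeriv a) := by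
  have := continuous_arctanSeries ha
  have := continuous_arctanSeriesDeriv ha
  unfold phiRadialDeriv
  fun_prop (disch := exact fun u => by simp [one_add_I_mul_ne_zero])

@[simp]
lemma phiRadialDeriv_zero : phiRadialDeriv a 0 = 0 := by
  simp [phiRadialDeriv]

lemma norm_phiRadialDeriv_le (ha : Summable a) (u : ℝ) :
    ‖phiRadialDeriv a u‖ ≤ (∑' i, |a i| + 6) / (1 + u ^ 2) ^ 2 := by
  set C := ∑' i, |a i|
  have hn : ‖1 + I * u‖ ^ 2 = 1 + u ^ 2 := norm_one_add_I_mul_sq u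
  have hpos : 0 < ‖1 + I * u‖ := norm_pos_iff.2 (one_add_I_mul_ne_zero u)
  have hfactor : ‖2 - I * u * arctanSeriesDeriv a u - 4 * I * u / (1 + I * u)‖ ≤ 6 + |u| * C := by
    have h1 : ‖I * u * arctanSeriesDeriv a u‖ ≤ |u| * C := by
      simpa using mul_le_mul_of_nonneg_left (abs_arctanSeriesDeriv_le ha u) (abs_nonneg u)
    have h2 : ‖4 * I * u / (1 + I * u)‖ ≤ 4 := by
      rw [norm_div, norm_mul, norm_mul]
      simpa [mul_div_assoc] using (div_le_one hpos).2 (abs_le_norm_one_add_I_mul u)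
    calc _ ≤ ‖(2 : ℂ)‖ + ‖I * u * arctanSeriesDeriv a u‖ + ‖4 * I * u / (1 + I * u)‖ :=
          norm_sub_le_of_le (norm_sub_le _ _) le_rfl
      _ ≤ 6 + |u| * C := by linarith [show ‖(2 : ℂ)‖ = 2 by norm_num]
  have hexp : ‖cexp (-2 * I * arctanSeries a u)‖ = 1 := by
    rw [Complex.norm_exp]; simp
  calc ‖phiRadialDeriv a u‖
      = u ^ 2 / (1 + u ^ 2) ^ 4 *
          ‖2 - I * u * arctanSeriesDeriv a u - 4 * I * u / (1 + I * u)‖ := by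
        rw [phiRadialDeriv, norm_mul, norm_div, norm_mul, hexp, norm_pow, norm_pow,
          show ‖1 + I * u‖ ^ 8 = (‖1 + I * u‖ ^ 2) ^ 4 by ring, hn]
        simp
    _ ≤ u ^ 2 / (1 + u ^ 2) ^ 4 * (6 + |u| * C) := by gcongr
    _ ≤ (C + 6) / (1 + u ^ 2) ^ 2 := by
        have hC : 0 ≤ C := tsum_nonneg fun i => abs_nonneg (a i)
        rw [div_mul_eq_mul_div, div_le_div_iff₀ (by positivity) (by positivity)]
        have h3 : u ^ 2 * |u| ≤ (1 + u ^ 2) ^ 2 := by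
          nlinarith [abs_nonneg u, sq_abs u, sq_nonneg (|u| - 1)]
        have h2 : u ^ 2 ≤ (1 + u ^ 2) ^ 2 := by nlinarith [sq_nonneg u]
        have : u ^ 2 * (6 + |u| * C) ≤ (C + 6) * (1 + u ^ 2) ^ 2 := by nlinarith
        calc u ^ 2 * (6 + |u| * C) * (1 + u ^ 2) ^ 2
            ≤ (C + 6) * (1 + u ^ 2) ^ 2 * (1 + u ^ 2) ^ 2 := by gcongr
          _ = (C + 6) * (1 + u ^ 2) ^ 4 := by ring

lemma hasDerivAt_phiRadial_sqrt_neg (ha : Summable a) (t : ℝ) :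
    HasDerivAt (fun t => phiRadial a √(-t)) (phiRadialDeriv a √(-t)) t := by
  have hsqrt : Continuous fun t : ℝ => √(-t) := by fun_prop
  refine hasDerivAt_of_hasDerivAt_of_ne' (f := fun t => phiRadial a √(-t))
    (g := fun t => phiRadialDeriv a √(-t)) (x := 0) (fun t ht => ?_)
    ((continuous_phiRadial ha).comp hsqrt).continuousAt
    ((continuous_phiRadialDeriv ha).comp hsqrt).continuousAt t
  rcases ht.lt_or_gt with ht | ht
  · have hu : (√(-t) : ℂ) ≠ 0 := by exact_mod_cast (sqrt_pos.2 (neg_pos.2 ht)).ne'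
    have hd := (hasDerivAt_neg' t).sqrt (neg_ne_zero.2 ht.ne)
    refine ((hasDerivAt_phiRadial ha _).scomp t hd).congr_deriv ?_
    rw [Complex.real_smul]
    push_cast
    field_simp
  · have hzero : ∀ s, 0 < s → √(-s) = 0 := fun s hs => sqrt_eq_zero'.2 (by linarith)
    rw [hzero t ht, phiRadialDeriv_zero]
    refine (hasDerivAt_const t (phiRadial a 0)).congr_of_eventuallyEq ?_
    filter_upwards [Ioi_mem_nhds ht] with s hs
    rw [hzero s hs]

lemma norm_phiRadialDeriv_sqrt_neg_le (ha : Summable a) (t : ℝ) :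
    ‖phiRadialDeriv a √(-t)‖ ≤ (∑' i, |a i| + 6) / (1 + t ^ 2) := by
  rcases le_or_gt t 0 with ht | ht
  · refine (norm_phiRadialDeriv_le ha _).trans
      (div_le_div_of_nonneg_left (by positivity) (by positivity) ?_)
    rw [sq_sqrt (neg_nonneg.2 ht)]
    nlinarith
  · rw [sqrt_eq_zero'.2 (by linarith), phiRadialDeriv_zero, norm_zero]
    positivity

end PhiRadial

lemma indicator_Iic_phiPlus {Γ : Set ℝ} (ha : Summable fun γ : Γ => (√(γ : ℝ))⁻¹) :
    (Iic 0).indicator (phiPlus Γ) = fun t => phiRadial (fun γ : Γ => (√(γ : ℝ))⁻¹) √(-t) := by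
  funext t
  rcases le_or_gt t 0 with ht | ht
  · have hprod : ∏' γ : Γ, (1 - I * (√(|t| / γ) : ℝ)) / (1 + I * (√(|t| / γ) : ℝ))
        = cexp (-2 * I * arctanSeries (fun γ : Γ => (√(γ : ℝ))⁻¹) √(-t)) := by
      rw [← (hasProd_cayley ha √(-t)).tprod_eq, abs_of_nonpos ht]
      simp_rw [sqrt_div (neg_nonneg.2 ht), div_eq_inv_mul]
    have ht2 : (t : ℂ) ^ 2 = (√(-t) : ℂ) ^ 4 := by
      rw [show (4 : ℕ) = 2 * 2 from rfl, pow_mul, ← Complex.ofReal_pow √(-t) 2,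
        sq_sqrt (neg_nonneg.2 ht)]
      push_cast
      ring
    rw [indicator_of_mem (mem_Iic.2 ht), phiPlus, hprod, phiRadial, ht2, abs_of_nonpos ht]
    ring
  · rw [indicator_of_notMem (notMem_Iic.2 ht), sqrt_eq_zero'.2 (by linarith)]
    simp [phiRadial]

theorem phiPlus_indicator_contDiff_general (Γ : Set ℝ)
    (hsum : Summable fun γ : Γ => 1 / Real.sqrt (γ : ℝ)) :
    ContDiff ℝ 1 (Set.indicator (Set.Iic (0:ℝ)) (phiPlus Γ)) ∧
    MemLp (deriv (Set.indicator (Set.Iic (0:ℝ)) (phiPlus Γ))) 2 volume := by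
  have ha : Summable fun γ : Γ => (√(γ : ℝ))⁻¹ := by simpa only [one_div] using hsum
  have hF := hasDerivAt_phiRadial_sqrt_neg ha
  have hderiv := funext fun t => (hF t).deriv
  have hcont : Continuous fun t => phiRadialDeriv (fun γ : Γ => (√(γ : ℝ))⁻¹) √(-t) :=
    (continuous_phiRadialDeriv ha).comp (by fun_prop)
  rw [indicator_Iic_phiPlus ha, hderiv]
  exact ⟨contDiff_one_iff_deriv.2 ⟨fun t => (hF t).differentiableAt, hderiv ▸ hcont⟩,
    memLp_two_of_norm_le_div_one_add_sq hcont.aestronglyMeasurable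
      (norm_phiRadialDeriv_sqrt_neg_le ha)⟩

/-- **Lemma 2.** The function `φ₊(t)·𝟙_{(-∞,0]}(t)` is continuously differentiable on `ℝ`
and its derivative belongs to `L²(ℝ)`. -/
theorem phiPlus_indicator_contDiff (Γ : Set ℝ) (hΓ : Γ ⊆ Set.Ioi 0)
    (hud : UniformlyDiscrete Γ)
    (hsum : Summable fun γ : Γ => 1 / Real.sqrt (γ : ℝ)) :
    ContDiff ℝ 1 (Set.indicator (Set.Iic (0:ℝ)) (phiPlus Γ)) ∧
    MemLp (deriv (Set.indicator (Set.Iic (0:ℝ)) (phiPlus Γ))) 2 volume :=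
  phiPlus_indicator_contDiff_general Γ hsum
end
end

section
/- Let w be a weight that is positive and increasing on (0,1) (so 1/w is decreasing on (0,1)). Let F and Φ be locally square-integrable functions on ℝ which vanish on (−∞,0), with Φ ∈ L²(0,1). If ∫₀¹ |F(s)|²/w(s) ds < ∞, then the convolution (F∗Φ)(t) = ∫₀ᵗ Φ(t−s)F(s) ds satisfies ∫₀¹ |(F∗Φ)(t)|²/w(t) dt < ∞. -/
open MeasureTheory Set
open scoped ENNReal NNReal

noncomputable section

/-!
After the reflection `s ↦ t - s`, Cauchy–Schwarz on `(0,t)` gives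
`|(F∗Φ)(t)|² ≤ ‖Φ‖²_{L²(0,1)} ∫₀ᵗ |F|²`, and since `w` is increasing,
`∫₀ᵗ |F|² ≤ w(t) ∫₀¹ |F|²/w`. So `|(F∗Φ)(t)|²/w(t)` is bounded uniformly in `t ∈ (0,1)`,
and `(0,1)` has finite measure.
-/

theorem ENNReal.sq_lintegral_mul_le {α : Type*} [MeasurableSpace α] {μ : Measure α}
    {f g : α → ℝ≥0∞} (hf : AEMeasurable f μ) (hg : AEMeasurable g μ) :
    (∫⁻ a, f a * g a ∂μ) ^ 2 ≤ (∫⁻ a, f a ^ 2 ∂μ) * ∫⁻ a, g a ^ 2 ∂μ := by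
  have h := ENNReal.lintegral_mul_le_Lp_mul_Lq μ Real.HolderConjugate.two_two hf hg
  simp only [ENNReal.rpow_ofNat, Pi.mul_apply] at h
  calc (∫⁻ a, f a * g a ∂μ) ^ 2
      ≤ ((∫⁻ a, f a ^ 2 ∂μ) ^ (1 / 2 : ℝ) * (∫⁻ a, g a ^ 2 ∂μ) ^ (1 / 2 : ℝ)) ^ 2 := by gcongr
    _ = (∫⁻ a, f a ^ 2 ∂μ) * ∫⁻ a, g a ^ 2 ∂μ := by
      rw [mul_pow, ← ENNReal.rpow_natCast, ← ENNReal.rpow_natCast, ← ENNReal.rpow_mul,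
        ← ENNReal.rpow_mul]
      norm_num

section NormedRing

variable {α E : Type*} [MeasurableSpace α] {μ : Measure α}
  [NormedRing E] [NormedSpace ℝ E]

theorem sq_enorm_integral_mul_le {f g : α → E} (hf : AEStronglyMeasurable f μ)
    (hg : AEStronglyMeasurable g μ) :
    ‖∫ a, f a * g a ∂μ‖ₑ ^ 2 ≤ (∫⁻ a, ‖f a‖ₑ ^ 2 ∂μ) * ∫⁻ a, ‖g a‖ₑ ^ 2 ∂μ := by
  have hmul : ‖∫ a, f a * g a ∂μ‖ₑ ≤ ∫⁻ a, ‖f a‖ₑ * ‖g a‖ₑ ∂μ :=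
    (enorm_integral_le_lintegral_enorm _).trans <| lintegral_mono fun a => by
      simpa only [enorm_eq_nnnorm, ← ENNReal.coe_mul, ENNReal.coe_le_coe] using nnnorm_mul_le _ _
  exact (pow_le_pow_left' hmul 2).trans (ENNReal.sq_lintegral_mul_le hf.enorm hg.enorm)

end NormedRing

theorem measurePreserving_sub_left_restrict_Ioo (t : ℝ) :
    MeasurePreserving (t - ·) (volume.restrict (Ioo 0 t)) (volume.restrict (Ioo 0 t)) := by
  have h := (Measure.measurePreserving_sub_left volume t).restrict_preimage
    (s := Ioo 0 t) measurableSet_Ioo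
  rwa [show (t - ·) ⁻¹' Ioo 0 t = Ioo 0 t by ext; simp [and_comm]] at h

theorem setLIntegral_Ioo_comp_sub_left (f : ℝ → ℝ≥0∞) (t : ℝ) :
    ∫⁻ s in Ioo 0 t, f (t - s) = ∫⁻ s in Ioo 0 t, f s :=
  (measurePreserving_sub_left_restrict_Ioo t).lintegral_comp_emb
    (MeasurableEquiv.subLeft t).measurableEmbedding f

theorem setLIntegral_le_ofReal_mul_setLIntegral_div {α : Type*} [MeasurableSpace α]
    {μ : Measure α} {s : Set α} (hs : MeasurableSet s) (g : α → ℝ≥0∞) {w : α → ℝ} {c : ℝ}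
    (hw : ∀ x ∈ s, 0 < w x ∧ w x ≤ c) :
    ∫⁻ x in s, g x ∂μ ≤ ENNReal.ofReal c * ∫⁻ x in s, g x / ENNReal.ofReal (w x) ∂μ := by
  rw [← lintegral_const_mul' _ _ ENNReal.ofReal_ne_top]
  refine setLIntegral_mono' hs fun x hx => ?_
  obtain ⟨hpos, hle⟩ := hw x hx
  calc g x = ENNReal.ofReal (w x) * (g x / ENNReal.ofReal (w x)) :=
        (ENNReal.mul_div_cancel (by simpa using hpos) ENNReal.ofReal_ne_top).symm
    _ ≤ ENNReal.ofReal c * (g x / ENNReal.ofReal (w x)) := by gcongr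

section Convolution

variable {E : Type*} [NormedRing E] [NormedSpace ℝ E] {Φ F : ℝ → E}

theorem sq_enorm_integral_Ioo_conv_le {t : ℝ}
    (hΦ : AEStronglyMeasurable Φ (volume.restrict (Ioo 0 t)))
    (hF : AEStronglyMeasurable F (volume.restrict (Ioo 0 t))) :
    ‖∫ s in Ioo 0 t, Φ (t - s) * F s‖ₑ ^ 2 ≤
      (∫⁻ u in Ioo 0 t, ‖Φ u‖ₑ ^ 2) * ∫⁻ s in Ioo 0 t, ‖F s‖ₑ ^ 2 := by
  have hΦt : AEStronglyMeasurable (fun s => Φ (t - s)) (volume.restrict (Ioo 0 t)) :=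
    hΦ.comp_quasiMeasurePreserving
      (measurePreserving_sub_left_restrict_Ioo t).quasiMeasurePreserving
  simpa only [setLIntegral_Ioo_comp_sub_left (fun u => ‖Φ u‖ₑ ^ 2)] using
    sq_enorm_integral_mul_le hΦt hF

theorem sq_enorm_integral_Ioo_conv_div_le {w : ℝ → ℝ} {T t : ℝ}
    (hwpos : ∀ t ∈ Ioo 0 T, 0 < w t) (hwmono : MonotoneOn w (Ioo 0 T))
    (hΦ : AEStronglyMeasurable Φ (volume.restrict (Ioo 0 T)))
    (hF : AEStronglyMeasurable F (volume.restrict (Ioo 0 T))) (ht : t ∈ Ioo 0 T) :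
    ‖∫ s in Ioo 0 t, Φ (t - s) * F s‖ₑ ^ 2 / ENNReal.ofReal (w t) ≤
      (∫⁻ u in Ioo 0 T, ‖Φ u‖ₑ ^ 2) * ∫⁻ s in Ioo 0 T, ‖F s‖ₑ ^ 2 / ENNReal.ofReal (w s) := by
  have hsub : Ioo 0 t ⊆ Ioo 0 T := Ioo_subset_Ioo_right ht.2.le
  have hwt : ENNReal.ofReal (w t) ≠ 0 := by simpa using hwpos t ht
  have hFw : ∫⁻ s in Ioo 0 t, ‖F s‖ₑ ^ 2 ≤
      ENNReal.ofReal (w t) * ∫⁻ s in Ioo 0 T, ‖F s‖ₑ ^ 2 / ENNReal.ofReal (w s) :=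
    (setLIntegral_le_ofReal_mul_setLIntegral_div measurableSet_Ioo _ fun s hs =>
      ⟨hwpos s (hsub hs), hwmono (hsub hs) ht hs.2.le⟩).trans (by gcongr)
  rw [ENNReal.div_le_iff hwt ENNReal.ofReal_ne_top]
  calc ‖∫ s in Ioo 0 t, Φ (t - s) * F s‖ₑ ^ 2
      ≤ (∫⁻ u in Ioo 0 t, ‖Φ u‖ₑ ^ 2) * ∫⁻ s in Ioo 0 t, ‖F s‖ₑ ^ 2 :=
        sq_enorm_integral_Ioo_conv_le (hΦ.mono_measure (Measure.restrict_mono hsub le_rfl))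
          (hF.mono_measure (Measure.restrict_mono hsub le_rfl))
    _ ≤ (∫⁻ u in Ioo 0 T, ‖Φ u‖ₑ ^ 2) *
        (ENNReal.ofReal (w t) * ∫⁻ s in Ioo 0 T, ‖F s‖ₑ ^ 2 / ENNReal.ofReal (w s)) := by
        gcongr
    _ = _ := by ring

end Convolution

theorem convolution_weighted_L2_general (w : ℝ → ℝ)
    (hwpos : ∀ t ∈ Set.Ioo (0:ℝ) 1, 0 < w t)
    (hwmono : MonotoneOn w (Set.Ioo (0:ℝ) 1))
    (F Φ : ℝ → ℂ)
    (hFloc : ∀ r : ℝ, 0 < r → MemLp F 2 (volume.restrict (Set.Ioo (-r) r)))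
    (hΦloc : ∀ r : ℝ, 0 < r → MemLp Φ 2 (volume.restrict (Set.Ioo (-r) r)))
    (hF : (∫⁻ s in Set.Ioo (0:ℝ) 1, (‖F s‖₊ : ℝ≥0∞) ^ 2 / ENNReal.ofReal (w s)) ≠ ⊤) :
    (∫⁻ t in Set.Ioo (0:ℝ) 1,
      (‖∫ s in Set.Ioo (0:ℝ) t, Φ (t - s) * F s‖₊ : ℝ≥0∞) ^ 2 / ENNReal.ofReal (w t)) ≠ ⊤ := by
  have hI : volume.restrict (Ioo (0:ℝ) 1) ≤ volume.restrict (Ioo (-1) 1) :=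
    Measure.restrict_mono (Ioo_subset_Ioo_left (by norm_num)) le_rfl
  have hΦ : MemLp Φ 2 (volume.restrict (Ioo 0 1)) := (hΦloc 1 one_pos).mono_measure hI
  have hΦ2 : ∫⁻ u in Ioo (0:ℝ) 1, ‖Φ u‖ₑ ^ 2 ≠ ⊤ := by
    simpa only [ENNReal.toReal_ofNat, ENNReal.rpow_ofNat] using
      (lintegral_rpow_enorm_lt_top_of_eLpNorm_lt_top two_ne_zero ENNReal.ofNat_ne_top
        hΦ.eLpNorm_lt_top).ne
  simp only [← enorm_eq_nnnorm] at hF ⊢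
  refine ne_top_of_le_ne_top ?_ (setLIntegral_mono' measurableSet_Ioo fun t ht =>
    sq_enorm_integral_Ioo_conv_div_le hwpos hwmono hΦ.1 ((hFloc 1 one_pos).mono_measure hI).1 ht)
  rw [setLIntegral_const, Real.volume_Ioo]
  exact ENNReal.mul_ne_top (ENNReal.mul_ne_top hΦ2 hF) ENNReal.ofReal_ne_top

/-- **Lemma 5.** If `w` is positive and increasing on `(0,1)`, `F, Φ` are locally `L²` on `ℝ`
and vanish on `(-∞,0)`, and `∫₀¹|F|²/w < ∞`, then `∫₀¹|F∗Φ|²/w < ∞`, where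
`(F∗Φ)(t) = ∫₀ᵗ Φ(t-s)F(s) ds`. -/
theorem convolution_weighted_L2 (w : ℝ → ℝ)
    (hwpos : ∀ t ∈ Set.Ioo (0:ℝ) 1, 0 < w t)
    (hwmono : MonotoneOn w (Set.Ioo (0:ℝ) 1))
    (F Φ : ℝ → ℂ)
    (hFloc : ∀ r : ℝ, 0 < r → MemLp F 2 (volume.restrict (Set.Ioo (-r) r)))
    (hΦloc : ∀ r : ℝ, 0 < r → MemLp Φ 2 (volume.restrict (Set.Ioo (-r) r)))
    (hF0 : ∀ t : ℝ, t < 0 → F t = 0) (hΦ0 : ∀ t : ℝ, t < 0 → Φ t = 0)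
    (hF : (∫⁻ s in Set.Ioo (0:ℝ) 1, (‖F s‖₊ : ℝ≥0∞) ^ 2 / ENNReal.ofReal (w s)) ≠ ⊤) :
    (∫⁻ t in Set.Ioo (0:ℝ) 1,
      (‖∫ s in Set.Ioo (0:ℝ) t, Φ (t - s) * F s‖₊ : ℝ≥0∞) ^ 2 / ENNReal.ofReal (w t)) ≠ ⊤ :=
  convolution_weighted_L2_general w hwpos hwmono F Φ hFloc hΦloc hF
end
end
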